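/- arXiv:0707.2113 — 6 statements merged into one kernel-verified Lean document; each statement's English description precedes it below -/
import Mathlib

section
/- Let n be a positive integer, 0 < g ≤ h < n integers, and define S(n,g,h,p) = Σ_{k=g}^{h} C(n,k) p^k (1-p)^(n-k). For 0 < u < v < 1, the minimum of S(n,g,h,p) over p ∈ [u,v] equals min{S(n,g,h,u), S(n,g,h,v)}. -/
open Finset

/-- telescoping sum -/
lemma telescope_Icc (F : ℕ → ℝ) (g h : ℕ) (hg : 0 < g) (hgh : g ≤ h) :
    ∑ k ∈ Finset.Icc g h, (F (k - 1) - F k) = F (g - 1) - F h := by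
  induction h with
  | zero => omega
  | succ m ih =>
    rcases eq_or_lt_of_le hgh with rfl | hlt
    · simp
    · have hgm : g ≤ m := by omega
      rw [Finset.sum_Icc_succ_top hgh, ih hgm]
      have : (m + 1) - 1 = m := by omega
      rw [this]; ring

lemma choose_cast_mul (n k : ℕ) (hk : 0 < k) (hkn : k ≤ n) :
    ((n.choose k : ℝ)) * k = n * ((n - 1).choose (k - 1)) := by
  obtain ⟨m, rfl⟩ : ∃ m, n = m + 1 := ⟨n - 1, by omega⟩
  obtain ⟨j, rfl⟩ : ∃ j, k = j + 1 := ⟨k - 1, by omega⟩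
  have := Nat.add_one_mul_choose_eq m j
  have : (m + 1) * m.choose j = (m + 1).choose (j + 1) * (j + 1) := by
    simpa [Nat.succ_eq_add_one] using this
  push_cast [show m + 1 - 1 = m from rfl, show j + 1 - 1 = j from rfl]
  exact_mod_cast (by exact_mod_cast congrArg (Nat.cast (R := ℝ)) this.symm : _)

lemma choose_cast_mul' (n k : ℕ) (hkn : k < n) :
    ((n.choose k : ℝ)) * ((n - k : ℕ) : ℝ) = n * ((n - 1).choose k) := by
  have h2 : ((n.choose (n - k) : ℝ)) * ((n - k : ℕ) : ℝ)
      = n * ((n - 1).choose (n - k - 1)) := by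
    exact choose_cast_mul n (n - k) (by omega) (by omega)
  have h3 : (n - 1).choose (n - k - 1) = (n - 1).choose k := by
    have : n - k - 1 = (n - 1) - k := by omega
    rw [this, Nat.choose_symm (by omega)]
  rw [show n.choose k = n.choose (n - k) from by rw [Nat.choose_symm (by omega)], h2, h3]

/-- derivative of the partial sum -/
lemma partial_sum_hasDeriv (n g h : ℕ) (hg : 0 < g) (hgh : g ≤ h) (hhn : h < n) (p : ℝ) :
    HasDerivAt (fun p : ℝ => ∑ k ∈ Finset.Icc g h, (n.choose k : ℝ) * p ^ k * (1 - p) ^ (n - k))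
      ((n : ℝ) * (((n - 1).choose (g - 1) : ℝ) * p ^ (g - 1) * (1 - p) ^ (n - g)
        - ((n - 1).choose h : ℝ) * p ^ h * (1 - p) ^ (n - 1 - h))) p := by
  set F : ℕ → ℝ := fun j => ((n - 1).choose j : ℝ) * p ^ j * (1 - p) ^ (n - 1 - j) with hF
  have key : ∀ k ∈ Finset.Icc g h,
      HasDerivAt (fun p : ℝ => (n.choose k : ℝ) * p ^ k * (1 - p) ^ (n - k))
        ((n : ℝ) * (F (k - 1) - F k)) p := by
    intro k hk
    simp only [Finset.mem_Icc] at hk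
    have hk1 : 1 ≤ k := by omega
    have hkn : k < n := by omega
    have h2 : HasDerivAt (fun q : ℝ => (1 - q) ^ (n - k))
        (-(((n - k : ℕ) : ℝ) * (1 - p) ^ (n - k - 1))) p := by
      have := (hasDerivAt_pow (n - k) (1 - p)).comp p
        ((hasDerivAt_const p (1 : ℝ)).sub (hasDerivAt_id p))
      simpa [Function.comp_def] using this
    have h1 := hasDerivAt_pow k p
    have hmul := (h1.mul h2).const_mul ((n.choose k : ℝ))
    have : (fun q : ℝ => (n.choose k : ℝ) * (q ^ k * (1 - q) ^ (n - k)))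
        = fun q : ℝ => (n.choose k : ℝ) * q ^ k * (1 - q) ^ (n - k) := by
      funext q; ring
    simp only [Pi.mul_apply] at hmul
    rw [this] at hmul
    refine hmul.congr_deriv (Eq.symm ?_)
    have e1 := choose_cast_mul n k hk1 (le_of_lt hkn)
    have e2 := choose_cast_mul' n k hkn
    simp only [hF]
    rw [show n - 1 - (k - 1) = n - k from by omega, show n - k - 1 = n - 1 - k from by omega]
    linear_combination (-(p ^ (k - 1) * (1 - p) ^ (n - k))) * e1
      + p ^ k * (1 - p) ^ (n - 1 - k) * e2
  have hsum := HasDerivAt.fun_sum key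
  refine hsum.congr_deriv (Eq.symm ?_)
  rw [← Finset.mul_sum, telescope_Icc F g h hg hgh]
  simp only [hF]
  rw [show n - 1 - (g - 1) = n - g from by omega]

theorem binom_partial_sum_min_at_endpoints (n g h : ℕ) (hg : 0 < g) (hgh : g ≤ h) (hhn : h < n)
    (u v : ℝ) (hu : 0 < u) (huv : u < v) (hv : v < 1) :
    IsLeast
      ((fun p : ℝ => ∑ k ∈ Finset.Icc g h, (n.choose k : ℝ) * p ^ k * (1 - p) ^ (n - k)) ''
        Set.Icc u v)
      (min (∑ k ∈ Finset.Icc g h, (n.choose k : ℝ) * u ^ k * (1 - u) ^ (n - k))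
        (∑ k ∈ Finset.Icc g h, (n.choose k : ℝ) * v ^ k * (1 - v) ^ (n - k))) := by
  set S : ℝ → ℝ :=
    fun p : ℝ => ∑ k ∈ Finset.Icc g h, (n.choose k : ℝ) * p ^ k * (1 - p) ^ (n - k) with hS
  have hderiv : ∀ p : ℝ, HasDerivAt S
      ((n : ℝ) * (((n - 1).choose (g - 1) : ℝ) * p ^ (g - 1) * (1 - p) ^ (n - g)
        - ((n - 1).choose h : ℝ) * p ^ h * (1 - p) ^ (n - 1 - h))) p :=
    fun p => partial_sum_hasDeriv n g h hg hgh hhn p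
  have hdiff : Differentiable ℝ S := fun p => (hderiv p).differentiableAt
  set a : ℝ := ((n - 1).choose (g - 1) : ℝ) with ha
  set b : ℝ := ((n - 1).choose h : ℝ) with hb
  have ha0 : 0 < a := by
    rw [ha]; exact_mod_cast Nat.choose_pos (show g - 1 ≤ n - 1 by omega)
  have hb0 : 0 < b := by
    rw [hb]; exact_mod_cast Nat.choose_pos (show h ≤ n - 1 by omega)
  set M : ℕ := h - g + 1 with hM
  set G : ℝ → ℝ := fun x => a * (1 - x) ^ M - b * x ^ M with hG
  -- factorization of the derivative
  have hfact : ∀ x : ℝ, deriv S x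
      = (n : ℝ) * (x ^ (g - 1) * (1 - x) ^ (n - 1 - h)) * G x := by
    intro x
    rw [(hderiv x).deriv]
    simp only [hG]
    rw [show n - g = (n - 1 - h) + M from by omega, show h = (g - 1) + M from by omega]
    rw [pow_add, pow_add]
    ring
  -- G is antitone on [0,1]
  have hGanti : ∀ x y : ℝ, 0 ≤ x → x ≤ y → y ≤ 1 → G y ≤ G x := by
    intro x y hx hxy hy1
    simp only [hG]
    have h1 : (1 - y) ^ M ≤ (1 - x) ^ M :=
      pow_le_pow_left₀ (by linarith) (by linarith) M
    have h2 : x ^ M ≤ y ^ M := pow_le_pow_left₀ hx hxy M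
    nlinarith [ha0.le, hb0.le]
  constructor
  · rcases le_total (S u) (S v) with hle | hle
    · rw [min_eq_left hle]
      exact ⟨u, ⟨le_refl u, huv.le⟩, rfl⟩
    · rw [min_eq_right hle]
      exact ⟨v, ⟨huv.le, le_refl v⟩, rfl⟩
  · rintro y ⟨p, hp, rfl⟩
    obtain ⟨hup, hpv⟩ := hp
    have hp0 : 0 < p := lt_of_lt_of_le hu hup
    have hp1 : p < 1 := lt_of_le_of_lt hpv hv
    by_cases hGp : 0 ≤ G p
    · -- S is monotone on [u, p]
      have hmono : MonotoneOn S (Set.Icc u p) := by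
        apply monotoneOn_of_deriv_nonneg (convex_Icc u p)
          hdiff.continuous.continuousOn hdiff.differentiableOn
        intro x hx
        rw [interior_Icc] at hx
        obtain ⟨hux, hxp⟩ := hx
        have hx0 : 0 < x := lt_trans hu hux
        have hx1 : x < 1 := lt_trans hxp hp1
        rw [hfact x]
        have hGx : 0 ≤ G x := le_trans hGp (hGanti x p hx0.le hxp.le hp1.le)
        have hpos : 0 ≤ (n : ℝ) * (x ^ (g - 1) * (1 - x) ^ (n - 1 - h)) :=
          mul_nonneg n.cast_nonneg
            (mul_nonneg (pow_nonneg hx0.le _) (pow_nonneg (by linarith) _))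
        exact mul_nonneg hpos hGx
      calc min (S u) (S v) ≤ S u := min_le_left _ _
        _ ≤ S p := hmono ⟨le_refl u, hup⟩ ⟨hup, le_refl p⟩ hup
    · -- S is antitone on [p, v]
      push_neg at hGp
      have hanti : AntitoneOn S (Set.Icc p v) := by
        apply antitoneOn_of_deriv_nonpos (convex_Icc p v)
          hdiff.continuous.continuousOn hdiff.differentiableOn
        intro x hx
        rw [interior_Icc] at hx
        obtain ⟨hpx, hxv⟩ := hx
        have hx0 : 0 < x := lt_trans hp0 hpx
        have hx1 : x < 1 := lt_trans hxv hv
        rw [hfact x]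
        have hGx : G x ≤ G p := hGanti p x hp0.le hpx.le hx1.le
        have hpos : 0 ≤ (n : ℝ) * (x ^ (g - 1) * (1 - x) ^ (n - 1 - h)) :=
          mul_nonneg n.cast_nonneg
            (mul_nonneg (pow_nonneg hx0.le _) (pow_nonneg (by linarith) _))
        exact mul_nonpos_of_nonneg_of_nonpos hpos (by linarith)
      calc min (S u) (S v) ≤ S v := min_le_right _ _
        _ ≤ S p := hanti ⟨le_refl p, hpv⟩ ⟨hpv, le_refl v⟩ hpv
end

section
/- Let n be a positive integer, 0 < g ≤ h < n integers, and S(n,g,h,p) = Σ_{k=g}^{h} C(n,k) p^k (1-p)^(n-k). Then for p ∈ (0,1), ∂S/∂p > 0 whenever p < 1 - (1 + [h!(n-h-1)!/((g-1)!(n-g)!)]^{1/(h-g+1)})^{-1}. -/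
lemma term_deriv (n k : ℕ) (p : ℝ) :
    HasDerivAt (fun q : ℝ => (n.choose k : ℝ) * q ^ k * (1 - q) ^ (n - k))
      ((n.choose k : ℝ) * (k * p ^ (k-1)) * (1-p)^(n-k)
        - (n.choose k : ℝ) * p^k * ((n-k : ℕ) * (1-p)^(n-k-1))) p := by
  have h1 : HasDerivAt (fun q : ℝ => (n.choose k : ℝ) * q ^ k)
      ((n.choose k : ℝ) * (k * p ^ (k-1))) p := (hasDerivAt_pow k p).const_mul _
  have h2 : HasDerivAt (fun q : ℝ => (1 - q) ^ (n - k))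
      (-((n-k : ℕ) * (1-p)^(n-k-1))) p := by
    have := (((hasDerivAt_id p).const_sub 1).fun_pow (n-k))
    simpa [id] using this.neg.neg
  have := h1.fun_mul h2
  rw [sub_eq_add_neg, ← mul_neg]
  exact this

theorem binom_partial_sum_deriv_pos (n g h : ℕ) (hg : 0 < g) (hgh : g ≤ h) (hhn : h < n)
    (p : ℝ) (hp : p ∈ Set.Ioo (0 : ℝ) 1)
    (hlt : p < 1 - (1 + ((h.factorial * (n - h - 1).factorial : ℝ) /
        ((g - 1).factorial * (n - g).factorial : ℝ)) ^ ((1 : ℝ) / (h - g + 1)))⁻¹) :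
    0 < deriv (fun q : ℝ => ∑ k ∈ Finset.Icc g h,
        (n.choose k : ℝ) * q ^ k * (1 - q) ^ (n - k)) p := by
  obtain ⟨hp0, hp1⟩ := hp
  have h1p : (0:ℝ) < 1 - p := by linarith
  set m : ℕ := h - g + 1 with hm
  set r : ℝ := (h.factorial * (n - h - 1).factorial : ℝ) /
      ((g - 1).factorial * (n - g).factorial : ℝ) with hrdef
  have hrpos : 0 < r := by
    apply div_pos <;> positivity
  set R : ℝ := r ^ ((1:ℝ)/(m:ℝ)) with hRdef
  have hRpos : 0 < R := Real.rpow_pos_of_pos hrpos _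
  -- identify exponent
  have hexp : ((h:ℝ) - (g:ℝ) + 1) = (m:ℝ) := by
    push_cast [hm, Nat.cast_sub hgh]
    ring
  rw [hexp] at hlt
  -- key : p/(1-p) < R
  have hE : 1 - (1+R)⁻¹ = R/(1+R) := by
    field_simp
    ring
  rw [hE] at hlt
  have h1R : (0:ℝ) < 1 + R := by linarith
  have hlt2 : p * (1+R) < R := (lt_div_iff₀ h1R).mp hlt
  have key : p / (1-p) < R := by
    rw [div_lt_iff₀ h1p]
    nlinarith
  -- key2 : p^m < r * (1-p)^m
  have hmne : (m:ℝ) ≠ 0 := by positivity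
  have hRm : R ^ m = r := by
    rw [hRdef, ← Real.rpow_natCast (r ^ ((1:ℝ)/(m:ℝ))) m, ← Real.rpow_mul hrpos.le,
      one_div, inv_mul_cancel₀ hmne, Real.rpow_one]
  have hpow : (p/(1-p))^m < R^m := by
    apply pow_lt_pow_left₀ key (by positivity)
    omega
  rw [hRm, div_pow] at hpow
  have key2 : p^m < r * (1-p)^m := by
    rw [div_lt_iff₀ (by positivity)] at hpow
    linarith [hpow]
  -- choose facts
  have hn1 : 1 ≤ n := by omega
  have hgn : g - 1 ≤ n - 1 := by omega
  have hhn1 : h ≤ n - 1 := by omega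
  have hCh : (0:ℝ) < ((n-1).choose h : ℝ) := by
    exact_mod_cast Nat.choose_pos hhn1
  -- r * C(n-1,h) = C(n-1,g-1)
  have hf1 : (n-1).choose (g-1) * (g-1).factorial * (n-g).factorial = (n-1).factorial := by
    have := Nat.choose_mul_factorial_mul_factorial hgn
    have e : n - 1 - (g-1) = n - g := by omega
    rwa [e] at this
  have hf2 : (n-1).choose h * h.factorial * (n-h-1).factorial = (n-1).factorial := by
    have := Nat.choose_mul_factorial_mul_factorial hhn1
    have e : n - 1 - h = n - h - 1 := by omega
    rwa [e] at this
  have hr : r * ((n-1).choose h : ℝ) = ((n-1).choose (g-1) : ℝ) := by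
    rw [hrdef]
    have c1 : ((n-1).choose (g-1) : ℝ) * (g-1).factorial * (n-g).factorial
        = (n-1).factorial := by exact_mod_cast hf1
    have c2 : ((n-1).choose h : ℝ) * h.factorial * (n-h-1).factorial
        = (n-1).factorial := by exact_mod_cast hf2
    have hfacpos : (0:ℝ) < ((g-1).factorial * (n-g).factorial : ℝ) := by positivity
    rw [div_mul_eq_mul_div, div_eq_iff hfacpos.ne']
    linear_combination c2 - c1
  -- main : C(n-1,h)*p^m < C(n-1,g-1)*(1-p)^m
  have main : ((n-1).choose h : ℝ) * p^m < ((n-1).choose (g-1) : ℝ) * (1-p)^m := by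
    calc ((n-1).choose h : ℝ) * p^m < ((n-1).choose h : ℝ) * (r * (1-p)^m) := by
            exact mul_lt_mul_of_pos_left key2 hCh
      _ = (r * ((n-1).choose h : ℝ)) * (1-p)^m := by ring
      _ = ((n-1).choose (g-1) : ℝ) * (1-p)^m := by rw [hr]
  -- derivative computation
  set T : ℕ → ℝ := fun j => (n:ℝ) * ((n-1).choose j : ℝ) * p^j * (1-p)^(n-1-j) with hT
  have hderiv : HasDerivAt (fun q : ℝ => ∑ k ∈ Finset.Icc g h,
      (n.choose k : ℝ) * q ^ k * (1 - q) ^ (n - k))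
      (∑ k ∈ Finset.Icc g h, ((n.choose k : ℝ) * (k * p ^ (k-1)) * (1-p)^(n-k)
        - (n.choose k : ℝ) * p^k * ((n-k : ℕ) * (1-p)^(n-k-1)))) p :=
    HasDerivAt.fun_sum fun k _ => term_deriv n k p
  rw [hderiv.deriv]
  have step : ∀ k ∈ Finset.Icc g h,
      ((n.choose k : ℝ) * (k * p ^ (k-1)) * (1-p)^(n-k)
        - (n.choose k : ℝ) * p^k * ((n-k : ℕ) * (1-p)^(n-k-1)))
      = T (k-1) - T k := by
    intro k hk
    obtain ⟨hk1, hk2⟩ := Finset.mem_Icc.mp hk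
    have hk0 : 1 ≤ k := by omega
    have hkn : k ≤ n := by omega
    obtain ⟨n', rfl⟩ : ∃ n', n = n' + 1 := ⟨n - 1, by omega⟩
    obtain ⟨k', rfl⟩ : ∃ k', k = k' + 1 := ⟨k - 1, by omega⟩
    have id1 : (n'+1).choose (k'+1) * (k'+1) = (n'+1) * n'.choose k' :=
      (Nat.add_one_mul_choose_eq n' k').symm
    have id2 : (n'+1).choose (k'+1) * ((n'+1) - (k'+1)) = (n'+1) * n'.choose (k'+1) := by
      have := Nat.choose_mul_succ_eq n' (k'+1)
      have e : n' + 1 - (k'+1) = n' - k' := by omega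
      rw [e] at this ⊢
      rw [← this, Nat.mul_comm]
    have c1 : ((n'+1).choose (k'+1) : ℝ) * ((k'+1 : ℕ) : ℝ)
        = ((n'+1 : ℕ) : ℝ) * (n'.choose k' : ℝ) := by exact_mod_cast id1
    have c2 : ((n'+1).choose (k'+1) : ℝ) * (((n'+1) - (k'+1) : ℕ) : ℝ)
        = ((n'+1 : ℕ) : ℝ) * (n'.choose (k'+1) : ℝ) := by exact_mod_cast id2
    simp only [hT]
    have e0 : n' + 1 - 1 = n' := by omega
    have e1 : k' + 1 - 1 = k' := by omega
    have e2 : n' - k' = n' + 1 - (k'+1) := by omega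
    have e3 : n' - (k'+1) = n' + 1 - (k'+1) - 1 := by omega
    rw [e0, e1, e2, e3]
    linear_combination (p^k' * (1-p)^(n'+1-(k'+1))) * c1
      - (p^(k'+1) * (1-p)^(n'+1-(k'+1)-1)) * c2
  rw [Finset.sum_congr rfl step]
  have htel : ∑ k ∈ Finset.Icc g h, (T (k-1) - T k) = T (g-1) - T h := by
    rw [← Finset.Ico_add_one_right_eq_Icc, Finset.sum_Ico_eq_sum_range]
    have := Finset.sum_range_sub' (fun i => T (g-1+i)) (h+1-g)
    have e5 : T (g-1+0) = T (g-1) := by norm_num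
    have e6 : T (g-1+(h+1-g)) = T h := by congr 1; omega
    rw [e5, e6] at this
    rw [← this]
    apply Finset.sum_congr rfl
    intro i _
    congr 2 <;> omega
  rw [htel, sub_pos]
  have hnpos : (0:ℝ) < (n:ℝ) := by exact_mod_cast hn1
  have base : (0:ℝ) < (n:ℝ) * p^(g-1) * (1-p)^(n-1-h) :=
    mul_pos (mul_pos hnpos (pow_pos hp0 _)) (pow_pos h1p _)
  have ep : p^h = p^(g-1) * p^m := by rw [← pow_add]; congr 1; omega
  have eq1 : (1-p)^(n-1-(g-1)) = (1-p)^(n-1-h) * (1-p)^m := by rw [← pow_add]; congr 1; omega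
  simp only [hT]
  rw [ep, eq1]
  calc (n:ℝ) * ((n-1).choose h : ℝ) * (p^(g-1) * p^m) * (1-p)^(n-1-h)
      = ((n:ℝ) * p^(g-1) * (1-p)^(n-1-h)) * (((n-1).choose h : ℝ) * p^m) := by ring
    _ < ((n:ℝ) * p^(g-1) * (1-p)^(n-1-h)) * (((n-1).choose (g-1) : ℝ) * (1-p)^m) :=
        mul_lt_mul_of_pos_left main base
    _ = (n:ℝ) * ((n-1).choose (g-1) : ℝ) * p^(g-1) * ((1-p)^(n-1-h) * (1-p)^m) := by ring
end

section
/- Let n be a positive integer, ε ∈ (0,1), 0 ≤ a < b ≤ 1, and let K be a binomial random variable with parameters n and p. Define C(p) = P(|K/n - p| < ε). Then min over p ∈ [a,b] of C(p) is attained at some point of the finite set {a, b} ∪ {ℓ/n + ε ∈ (a,b) : ℓ ∈ ℤ} ∪ {ℓ/n - ε ∈ (a,b) : ℓ ∈ ℤ}. -/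
open scoped Classical


noncomputable def Tm (n k : ℕ) (x : ℝ) : ℝ := (n.choose k : ℝ) * x ^ k * (1 - x) ^ (n - k)

noncomputable def w (n k : ℕ) (x : ℝ) : ℝ :=
  if k = 0 then 0 else (n : ℝ) * ((n-1).choose (k-1) : ℝ) * x ^ (k-1) * (1 - x) ^ (n - k)

lemma hasDerivAt_Tm (n k : ℕ) (hk : k ≤ n) (x : ℝ) :
    HasDerivAt (fun y => Tm n k y) (w n k x - w n (k+1) x) x := by
  have h1 : HasDerivAt (fun y : ℝ => y ^ k) ((k:ℝ) * x ^ (k-1)) x := by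
    simpa using hasDerivAt_pow k x
  have h2 : HasDerivAt (fun y : ℝ => (1 - y) ^ (n-k)) (-(((n-k:ℕ):ℝ) * (1-x) ^ (n-k-1))) x := by
    have h0 : HasDerivAt (fun y : ℝ => 1 - y) (-1) x := by
      simpa using (hasDerivAt_const x (1:ℝ)).fun_sub (hasDerivAt_id x)
    have := (hasDerivAt_pow (n-k) (1 - x)).comp x h0
    exact this.congr_deriv (by ring)
  have h := ((h1.fun_mul h2).const_mul ((n.choose k : ℝ)))
  have heq : (n.choose k : ℝ) * ((k:ℝ) * x ^ (k-1) * (1-x)^(n-k) + x ^ k * -(((n-k:ℕ):ℝ) * (1-x)^(n-k-1)))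
      = w n k x - w n (k+1) x := by
    rcases Nat.eq_zero_or_pos k with h0 | h0
    · subst h0
      simp only [w, if_pos rfl, if_neg (Nat.one_ne_zero)]
      rcases Nat.eq_zero_or_pos n with hn | hn
      · subst hn; norm_num
      · simp [Nat.choose_zero_right]
    · have e1 : (k:ℝ) * (n.choose k : ℝ) = (n:ℝ) * ((n-1).choose (k-1) : ℝ) := by
        obtain ⟨m, rfl⟩ : ∃ m, n = m + 1 := ⟨n - 1, by omega⟩
        obtain ⟨j, rfl⟩ : ∃ j, k = j + 1 := ⟨k - 1, by omega⟩
        simp only [Nat.add_sub_cancel]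
        have hnat : (j+1) * (m+1).choose (j+1) = (m+1) * m.choose j := by
          rw [mul_comm ((j:ℕ)+1) _, Nat.add_one_mul_choose_eq m j]
        exact_mod_cast congrArg (fun z : ℕ => (z:ℝ)) hnat
      have e2 : ((n-k:ℕ):ℝ) * (n.choose k : ℝ) = (n:ℝ) * ((n-1).choose k : ℝ) := by
        obtain ⟨m, rfl⟩ : ∃ m, n = m + 1 := ⟨n - 1, by omega⟩
        simp only [Nat.add_sub_cancel]
        have hnat : (m+1-k) * (m+1).choose k = (m+1) * m.choose k := by
          have := Nat.choose_mul_succ_eq m k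
          rw [mul_comm ((m:ℕ)+1-k) _, ← this, mul_comm]
        exact_mod_cast congrArg (fun z : ℕ => (z:ℝ)) hnat
      simp only [w, if_neg (by omega : k ≠ 0), if_neg (by omega : k + 1 ≠ 0), Nat.add_sub_cancel]
      have hnk1 : n - (k+1) = n - k - 1 := by omega
      rw [hnk1]
      linear_combination x^(k-1)*(1-x)^(n-k)*e1 - x^k*(1-x)^(n-k-1)*e2
  rw [show (fun y => Tm n k y) = (fun y => (n.choose k : ℝ) * (y ^ k * (1 - y) ^ (n - k))) by
    funext y; rw [Tm]; ring]
  rw [← heq]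
  convert h using 1

lemma telescope (g : ℕ → ℝ) (k₁ k₂ : ℕ) (h : k₁ ≤ k₂) :
    ∑ k ∈ Finset.Icc k₁ k₂, (g k - g (k+1)) = g k₁ - g (k₂+1) := by
  induction k₂ with
  | zero =>
    have : k₁ = 0 := by omega
    subst this; simp
  | succ m ih =>
    rcases Nat.lt_or_ge k₁ (m+1) with h' | h'
    · rw [Finset.sum_Icc_succ_top (by omega : k₁ ≤ m + 1), ih (by omega)]; ring
    · have : k₁ = m+1 := by omega
      subst this; simp

noncomputable def Bf (n k₁ k₂ : ℕ) (x : ℝ) : ℝ := ∑ k ∈ Finset.Icc k₁ k₂, Tm n k x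

lemma hasDerivAt_Bf (n k₁ k₂ : ℕ) (hk : k₁ ≤ k₂) (hk2 : k₂ ≤ n) (x : ℝ) :
    HasDerivAt (fun y => Bf n k₁ k₂ y) (w n k₁ x - w n (k₂+1) x) x := by
  have hsum := HasDerivAt.fun_sum (u := Finset.Icc k₁ k₂) (A := fun k y => Tm n k y)
      (A' := fun k => w n k x - w n (k+1) x) (x := x)
      (fun k hk' => hasDerivAt_Tm n k (le_trans (Finset.mem_Icc.1 hk').2 hk2) x)
  rw [telescope _ _ _ hk] at hsum
  exact hsum

lemma w_nonneg (n k : ℕ) (x : ℝ) (h0 : 0 ≤ x) (h1 : x ≤ 1) : 0 ≤ w n k x := by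
  unfold w
  split
  · exact le_refl 0
  · have h1x : (0:ℝ) ≤ 1 - x := by linarith
    positivity

lemma mono_aux (f f' : ℝ → ℝ) (hf : ∀ x, HasDerivAt f (f' x) x) (u v : ℝ)
    (huv : u ≤ v) (h : ∀ x ∈ Set.Icc u v, 0 ≤ f' x) : f u ≤ f v := by
  have cont : ContinuousOn f (Set.Icc u v) := fun x _ =>
    (hf x).continuousAt.continuousWithinAt
  have diff : DifferentiableOn ℝ f (interior (Set.Icc u v)) := fun x _ =>
    ((hf x).differentiableAt).differentiableWithinAt
  have hm : MonotoneOn f (Set.Icc u v) :=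
    monotoneOn_of_deriv_nonneg (convex_Icc u v) cont diff (fun x hx => by
      rw [(hf x).deriv]
      rw [interior_Icc] at hx
      exact h x (Set.Ioo_subset_Icc_self hx))
  exact hm (Set.left_mem_Icc.2 huv) (Set.right_mem_Icc.2 huv) huv

lemma anti_aux (f f' : ℝ → ℝ) (hf : ∀ x, HasDerivAt f (f' x) x) (u v : ℝ)
    (huv : u ≤ v) (h : ∀ x ∈ Set.Icc u v, f' x ≤ 0) : f v ≤ f u := by
  have cont : ContinuousOn f (Set.Icc u v) := fun x _ =>
    (hf x).continuousAt.continuousWithinAt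
  have diff : DifferentiableOn ℝ f (interior (Set.Icc u v)) := fun x _ =>
    ((hf x).differentiableAt).differentiableWithinAt
  have hm : AntitoneOn f (Set.Icc u v) :=
    antitoneOn_of_deriv_nonpos (convex_Icc u v) cont diff (fun x hx => by
      rw [(hf x).deriv]
      rw [interior_Icc] at hx
      exact h x (Set.Ioo_subset_Icc_self hx))
  exact hm (Set.left_mem_Icc.2 huv) (Set.right_mem_Icc.2 huv) huv

lemma Bf_min (n k₁ k₂ : ℕ) (hk : k₁ ≤ k₂) (hk2 : k₂ ≤ n) (L R p : ℝ)
    (hL : 0 ≤ L) (hLp : L ≤ p) (hpR : p ≤ R) (hR : R ≤ 1) :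
    min (Bf n k₁ k₂ L) (Bf n k₁ k₂ R) ≤ Bf n k₁ k₂ p := by
  have hder : ∀ x, HasDerivAt (fun y => Bf n k₁ k₂ y) (w n k₁ x - w n (k₂+1) x) x :=
    fun x => hasDerivAt_Bf n k₁ k₂ hk hk2 x
  rcases Nat.eq_zero_or_pos k₁ with hk10 | hk11
  · -- k₁ = 0 : derivative ≤ 0 on [0,1], f antitone, f R ≤ f p
    have hdle : ∀ x ∈ Set.Icc p R, w n k₁ x - w n (k₂+1) x ≤ 0 := by
      intro x hx
      have hx0 : 0 ≤ x := le_trans (le_trans hL hLp) hx.1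
      have hx1 : x ≤ 1 := le_trans hx.2 hR
      have h2 := w_nonneg n (k₂+1) x hx0 hx1
      have h1 : w n k₁ x = 0 := by simp [w, hk10]
      linarith
    have := anti_aux _ _ hder p R hpR hdle
    exact le_trans (min_le_right _ _) this
  rcases Nat.lt_or_ge k₂ n with hk2n | hk2n
  swap
  · -- k₂ = n
    have hk2e : k₂ = n := le_antisymm hk2 hk2n
    have hdge : ∀ x ∈ Set.Icc L p, 0 ≤ w n k₁ x - w n (k₂+1) x := by
      intro x hx
      have hx0 : 0 ≤ x := le_trans hL hx.1
      have hx1 : x ≤ 1 := le_trans hx.2 (le_trans hpR hR)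
      have h1 := w_nonneg n k₁ x hx0 hx1
      have h2 : w n (k₂+1) x = 0 := by
        simp only [w, if_neg (Nat.succ_ne_zero k₂), Nat.add_sub_cancel, hk2e,
          Nat.choose_eq_zero_of_lt (by omega : n - 1 < n)]
        simp
      linarith
    have := mono_aux _ _ hder L p hLp hdge
    exact le_trans (min_le_left _ _) this
  · -- 1 ≤ k₁ ≤ k₂ ≤ n-1
    have hfact : ∀ x : ℝ, w n k₁ x - w n (k₂+1) x =
        (n:ℝ) * x^(k₁-1) * (1-x)^(n-1-k₂) *
          (((n-1).choose (k₁-1) : ℝ) * (1-x)^(k₂-k₁+1) - ((n-1).choose k₂ : ℝ) * x^(k₂-k₁+1)) := by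
      intro x
      have e1 : ((1:ℝ)-x)^(n-1-k₂) * (1-x)^(k₂-k₁+1) = (1-x)^(n-k₁) := by
        rw [← pow_add]; congr 1; omega
      have e2 : (x:ℝ)^(k₁-1) * x^(k₂-k₁+1) = x^k₂ := by
        rw [← pow_add]; congr 1; omega
      have expand : (n:ℝ) * x^(k₁-1) * (1-x)^(n-1-k₂) *
          (((n-1).choose (k₁-1) : ℝ) * (1-x)^(k₂-k₁+1) - ((n-1).choose k₂ : ℝ) * x^(k₂-k₁+1))
          = (n:ℝ) * ((n-1).choose (k₁-1) : ℝ) * (x^(k₁-1) * ((1-x)^(n-1-k₂) * (1-x)^(k₂-k₁+1)))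
            - (n:ℝ) * ((n-1).choose k₂ : ℝ) * ((x^(k₁-1) * x^(k₂-k₁+1)) * (1-x)^(n-1-k₂)) := by
        ring
      rw [expand, e1, e2]
      simp only [w, if_neg (by omega : k₁ ≠ 0), if_neg (Nat.succ_ne_zero k₂), Nat.add_sub_cancel]
      rw [show n - (k₂+1) = n - 1 - k₂ by omega]
      ring
    have hc1n : (0:ℝ) ≤ ((n-1).choose (k₁-1) : ℝ) := by positivity
    have hc2n : (0:ℝ) ≤ ((n-1).choose k₂ : ℝ) := by positivity
    set c₁ : ℝ := ((n-1).choose (k₁-1) : ℝ)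
    set c₂ : ℝ := ((n-1).choose k₂ : ℝ)
    have hanti : ∀ x y : ℝ, 0 ≤ x → x ≤ y → y ≤ 1 →
        c₁ * (1-y)^(k₂-k₁+1) - c₂ * y^(k₂-k₁+1) ≤ c₁ * (1-x)^(k₂-k₁+1) - c₂ * x^(k₂-k₁+1) := by
      intro x y hx hxy hy1
      have e1 : (1-y:ℝ)^(k₂-k₁+1) ≤ (1-x)^(k₂-k₁+1) :=
        pow_le_pow_left₀ (by linarith) (by linarith) _
      have e2 : (x:ℝ)^(k₂-k₁+1) ≤ y^(k₂-k₁+1) := pow_le_pow_left₀ hx hxy _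
      nlinarith
    by_cases hcase : ∀ t ∈ Set.Icc L p, 0 ≤ c₁ * (1-t)^(k₂-k₁+1) - c₂ * t^(k₂-k₁+1)
    · have hdge : ∀ x ∈ Set.Icc L p, 0 ≤ w n k₁ x - w n (k₂+1) x := by
        intro x hx
        rw [hfact]
        have hx0 : 0 ≤ x := le_trans hL hx.1
        have hx1 : x ≤ 1 := le_trans hx.2 (le_trans hpR hR)
        have hc := hcase x hx
        have h1x : (0:ℝ) ≤ 1 - x := by linarith
        have hpre : (0:ℝ) ≤ (n:ℝ) * x^(k₁-1) * (1-x)^(n-1-k₂) := by positivity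
        exact mul_nonneg hpre hc
      have := mono_aux _ _ hder L p hLp hdge
      exact le_trans (min_le_left _ _) this
    · push_neg at hcase
      obtain ⟨t, ht, htneg⟩ := hcase
      have hdle : ∀ x ∈ Set.Icc p R, w n k₁ x - w n (k₂+1) x ≤ 0 := by
        intro x hx
        rw [hfact]
        have hx0 : 0 ≤ x := le_trans (le_trans hL hLp) hx.1
        have hx1 : x ≤ 1 := le_trans hx.2 hR
        have ht0 : 0 ≤ t := le_trans hL ht.1
        have htx : t ≤ x := le_trans ht.2 hx.1
        have hhx := hanti t x ht0 htx hx1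
        have hhxneg : c₁ * (1-x)^(k₂-k₁+1) - c₂ * x^(k₂-k₁+1) ≤ 0 := by linarith
        have h1x : (0:ℝ) ≤ 1 - x := by linarith
        have hpre : (0:ℝ) ≤ (n:ℝ) * x^(k₁-1) * (1-x)^(n-1-k₂) := by positivity
        exact mul_nonpos_of_nonneg_of_nonpos hpre hhxneg
      have := anti_aux _ _ hder p R hpR hdle
      exact le_trans (min_le_right _ _) this

lemma Tm_nonneg (n k : ℕ) (x : ℝ) (h0 : 0 ≤ x) (h1 : x ≤ 1) : 0 ≤ Tm n k x := by
  unfold Tm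
  have : (0:ℝ) ≤ 1 - x := by linarith
  positivity

noncomputable def Cov (n : ℕ) (ε p : ℝ) : ℝ :=
  ∑ k ∈ Finset.range (n + 1),
    if |(k : ℝ) / n - p| < ε then (n.choose k : ℝ) * p ^ k * (1 - p) ^ (n - k) else 0

lemma Cov_eq (n : ℕ) (ε p : ℝ) :
    Cov n ε p = ∑ k ∈ Finset.range (n + 1),
      if |(k : ℝ) / n - p| < ε then Tm n k p else 0 := by
  unfold Cov Tm; rfl

lemma key (n : ℕ) (hn : 0 < n) (ε : ℝ) (hε : 0 < ε)
    (a b : ℝ) (ha : 0 ≤ a) (hab : a < b) (hb : b ≤ 1)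
    (T : Finset ℝ) (haT : a ∈ T) (hbT : b ∈ T)
    (hmemT : ∀ k : ℕ, k ≤ n → ∀ s : ℝ, (s = (k:ℝ)/n + ε ∨ s = (k:ℝ)/n - ε) →
      a < s → s < b → s ∈ T)
    (hTab : ∀ x ∈ T, a ≤ x ∧ x ≤ b)
    (p : ℝ) (hp : p ∈ Set.Icc a b) :
    ∃ q ∈ T, Cov n ε q ≤ Cov n ε p := by
  have hTLne : (T.filter (fun x => x ≤ p)).Nonempty := ⟨a, Finset.mem_filter.2 ⟨haT, hp.1⟩⟩
  have hTRne : (T.filter (fun x => p ≤ x)).Nonempty := ⟨b, Finset.mem_filter.2 ⟨hbT, hp.2⟩⟩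
  set L := (T.filter (fun x => x ≤ p)).max' hTLne with hLdef
  set R := (T.filter (fun x => p ≤ x)).min' hTRne with hRdef
  have hLmem := Finset.max'_mem _ hTLne
  have hRmem := Finset.min'_mem _ hTRne
  have hLT : L ∈ T := (Finset.mem_filter.1 hLmem).1
  have hRT : R ∈ T := (Finset.mem_filter.1 hRmem).1
  have hLp : L ≤ p := (Finset.mem_filter.1 hLmem).2
  have hpR : p ≤ R := (Finset.mem_filter.1 hRmem).2
  have hLmax : ∀ x ∈ T, x ≤ p → x ≤ L := by
    intro x hx hxp
    apply Finset.le_max'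
    exact Finset.mem_filter.2 ⟨hx, hxp⟩
  have hRmin : ∀ x ∈ T, p ≤ x → R ≤ x := by
    intro x hx hxp
    apply Finset.min'_le
    exact Finset.mem_filter.2 ⟨hx, hxp⟩
  by_cases hLeq : L = p
  · exact ⟨L, hLT, by rw [hLeq]⟩
  by_cases hReq : R = p
  · exact ⟨R, hRT, by rw [hReq]⟩
  have hLlt : L < p := lt_of_le_of_ne hLp hLeq
  have hRgt : p < R := lt_of_le_of_ne hpR (fun h => hReq h.symm)
  have haL : a ≤ L := (hTab L hLT).1
  have hRb : R ≤ b := (hTab R hRT).2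
  have hL0 : 0 ≤ L := le_trans ha haL
  have hR1 : R ≤ 1 := le_trans hRb hb
  have hnR : (0:ℝ) < (n:ℝ) := by exact_mod_cast hn
  -- active set containment at L and R
  have hactL : ∀ k : ℕ, k ≤ n → |(k:ℝ)/n - L| < ε → |(k:ℝ)/n - p| < ε := by
    intro k hk habs
    rw [abs_lt] at habs
    by_contra hcon
    push_neg at hcon
    rcases le_abs.1 hcon with h1 | h1
    · -- ε ≤ k/n - p : p ≤ k/n - ε < L, contradiction with L < p
      linarith [habs.1]
    · -- ε ≤ p - k/n : k/n + ε ≤ p ; β := k/n + ε ∈ T, β ≤ p, β > L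
      have hβT : ((k:ℝ)/n + ε) ∈ T := by
        apply hmemT k hk _ (Or.inl rfl)
        · linarith [habs.2]
        · linarith
      have := hLmax _ hβT (by linarith)
      linarith [habs.2]
  have hactR : ∀ k : ℕ, k ≤ n → |(k:ℝ)/n - R| < ε → |(k:ℝ)/n - p| < ε := by
    intro k hk habs
    rw [abs_lt] at habs
    by_contra hcon
    push_neg at hcon
    rcases le_abs.1 hcon with h1 | h1
    · -- ε ≤ k/n - p : β := k/n - ε ≥ p, β < R
      have hβT : ((k:ℝ)/n - ε) ∈ T := by
        apply hmemT k hk _ (Or.inr rfl)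
        · linarith
        · linarith [habs.1]
      have := hRmin _ hβT (by linarith)
      linarith [habs.1]
    · linarith [habs.2]
  -- the fixed active set S and g
  set S : Finset ℕ := (Finset.range (n+1)).filter (fun k : ℕ => |(k:ℝ)/n - p| < ε) with hSdef
  set g : ℝ → ℝ := fun x => ∑ k ∈ S, Tm n k x with hgdef
  have hgp : Cov n ε p = g p := by
    rw [Cov_eq]
    simp only [hgdef, hSdef, Finset.sum_filter]
  have hCle : ∀ q : ℝ, 0 ≤ q → q ≤ 1 →
      (∀ k : ℕ, k ≤ n → |(k:ℝ)/n - q| < ε → |(k:ℝ)/n - p| < ε) →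
      Cov n ε q ≤ g q := by
    intro q hq0 hq1 hact
    rw [Cov_eq]
    simp only [hgdef, hSdef, Finset.sum_filter]
    apply Finset.sum_le_sum
    intro k hkr
    have hkn : k ≤ n := by
      have := Finset.mem_range.1 hkr; omega
    by_cases hkq : |(k:ℝ)/n - q| < ε
    · rw [if_pos hkq, if_pos (hact k hkn hkq)]
    · rw [if_neg hkq]
      split
      · exact Tm_nonneg n k q hq0 hq1
      · exact le_refl 0
  have hCL : Cov n ε L ≤ g L := hCle L hL0 (by linarith) hactL
  have hCR : Cov n ε R ≤ g R := hCle R (by linarith) hR1 hactR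
  have hmin : min (g L) (g R) ≤ g p := by
    by_cases hS : S.Nonempty
    · set k₁ := S.min' hS with hk1def
      set k₂ := S.max' hS with hk2def
      have hk1S : k₁ ∈ S := Finset.min'_mem _ _
      have hk2S : k₂ ∈ S := Finset.max'_mem _ _
      have hk2n : k₂ ≤ n := by
        have := (Finset.mem_filter.1 hk2S).1
        have := Finset.mem_range.1 this; omega
      have hk12 : k₁ ≤ k₂ := Finset.min'_le _ _ hk2S
      have habs1 := (Finset.mem_filter.1 hk1S).2
      have habs2 := (Finset.mem_filter.1 hk2S).2
      rw [abs_lt] at habs1 habs2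
      have hicc : S = Finset.Icc k₁ k₂ := by
        apply Finset.ext
        intro k
        constructor
        · intro hkS
          exact Finset.mem_Icc.2 ⟨Finset.min'_le _ _ hkS, Finset.le_max' _ _ hkS⟩
        · intro hkI
          obtain ⟨h1, h2⟩ := Finset.mem_Icc.1 hkI
          refine Finset.mem_filter.2 ⟨Finset.mem_range.2 (by omega), ?_⟩
          have c1 : (k₁:ℝ)/n ≤ (k:ℝ)/n := by
            gcongr <;> exact_mod_cast h1
          have c2 : (k:ℝ)/n ≤ (k₂:ℝ)/n := by
            gcongr <;> exact_mod_cast h2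
          rw [abs_lt]
          constructor <;> [linarith [habs1.1]; linarith [habs2.2]]
      have hgBf : g = Bf n k₁ k₂ := by
        funext x
        rw [hgdef, hicc]; rfl
      rw [hgBf]
      exact Bf_min n k₁ k₂ hk12 hk2n L R p hL0 (le_of_lt hLlt) (le_of_lt hRgt) hR1
    · rw [Finset.not_nonempty_iff_eq_empty] at hS
      simp [hgdef, hS]
  rcases le_total (g L) (g R) with hLR | hLR
  · refine ⟨L, hLT, ?_⟩
    rw [hgp]
    calc Cov n ε L ≤ g L := hCL
      _ ≤ g p := by rw [min_eq_left hLR] at hmin; exact hmin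
  · refine ⟨R, hRT, ?_⟩
    rw [hgp]
    calc Cov n ε R ≤ g R := hCR
      _ ≤ g p := by rw [min_eq_right hLR] at hmin; exact hmin

theorem coverage_min_attained_abs (n : ℕ) (hn : 0 < n) (ε : ℝ) (hε : 0 < ε) (hε1 : ε < 1)
    (a b : ℝ) (ha : 0 ≤ a) (hab : a < b) (hb : b ≤ 1) :
    ∃ p₀ : ℝ,
      (p₀ = a ∨ p₀ = b ∨
        (∃ ℓ : ℤ, p₀ = (ℓ : ℝ) / n + ε ∧ a < p₀ ∧ p₀ < b) ∨
        (∃ ℓ : ℤ, p₀ = (ℓ : ℝ) / n - ε ∧ a < p₀ ∧ p₀ < b)) ∧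
      p₀ ∈ Set.Icc a b ∧
      ∀ p ∈ Set.Icc a b,
        (∑ k ∈ Finset.range (n + 1),
            if |(k : ℝ) / n - p₀| < ε then (n.choose k : ℝ) * p₀ ^ k * (1 - p₀) ^ (n - k) else 0)
          ≤ ∑ k ∈ Finset.range (n + 1),
            if |(k : ℝ) / n - p| < ε then (n.choose k : ℝ) * p ^ k * (1 - p) ^ (n - k) else 0 := by
  set T : Finset ℝ := insert a (insert b
    ((((Finset.range (n+1)).image (fun k : ℕ => (k:ℝ)/n + ε)) ∪
      ((Finset.range (n+1)).image (fun k : ℕ => (k:ℝ)/n - ε))).filter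
        (fun x => a < x ∧ x < b))) with hT
  have haT : a ∈ T := Finset.mem_insert_self _ _
  have hbT : b ∈ T := Finset.mem_insert_of_mem (Finset.mem_insert_self _ _)
  have hmemT : ∀ k : ℕ, k ≤ n → ∀ s : ℝ, (s = (k:ℝ)/n + ε ∨ s = (k:ℝ)/n - ε) →
      a < s → s < b → s ∈ T := by
    intro k hk s hs hsa hsb
    apply Finset.mem_insert_of_mem
    apply Finset.mem_insert_of_mem
    refine Finset.mem_filter.2 ⟨?_, hsa, hsb⟩
    rcases hs with h | h
    · exact Finset.mem_union_left _ (Finset.mem_image.2 ⟨k, Finset.mem_range.2 (by omega), h.symm⟩)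
    · exact Finset.mem_union_right _ (Finset.mem_image.2 ⟨k, Finset.mem_range.2 (by omega), h.symm⟩)
  have hTab : ∀ x ∈ T, a ≤ x ∧ x ≤ b := by
    intro x hx
    rcases Finset.mem_insert.1 hx with rfl | hx
    · exact ⟨le_refl _, le_of_lt hab⟩
    rcases Finset.mem_insert.1 hx with rfl | hx
    · exact ⟨le_of_lt hab, le_refl _⟩
    · have := (Finset.mem_filter.1 hx).2
      exact ⟨le_of_lt this.1, le_of_lt this.2⟩
  obtain ⟨p₀, hp₀T, hp₀min⟩ := T.exists_min_image (Cov n ε) ⟨a, haT⟩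
  refine ⟨p₀, ?_, ?_, ?_⟩
  · -- characterization
    rcases Finset.mem_insert.1 hp₀T with rfl | hx
    · exact Or.inl rfl
    rcases Finset.mem_insert.1 hx with rfl | hx
    · exact Or.inr (Or.inl rfl)
    · obtain ⟨hmem, hlt1, hlt2⟩ := Finset.mem_filter.1 hx
      rcases Finset.mem_union.1 hmem with h | h
      · obtain ⟨k, _, hk⟩ := Finset.mem_image.1 h
        refine Or.inr (Or.inr (Or.inl ⟨(k:ℤ), ?_, hlt1, hlt2⟩))
        rw [← hk]; push_cast; ring
      · obtain ⟨k, _, hk⟩ := Finset.mem_image.1 h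
        refine Or.inr (Or.inr (Or.inr ⟨(k:ℤ), ?_, hlt1, hlt2⟩))
        rw [← hk]; push_cast; ring
  · exact ⟨(hTab p₀ hp₀T).1, (hTab p₀ hp₀T).2⟩
  · intro p hp
    obtain ⟨q, hqT, hq⟩ := key n hn ε hε a b ha hab hb T haT hbT hmemT hTab p hp
    calc Cov n ε p₀ ≤ Cov n ε q := hp₀min q hqT
      _ ≤ Cov n ε p := hq
end

section
/- Let n be a positive integer, ε ∈ (0,1), 0 < a < b ≤ 1, and K a binomial random variable with parameters n and p. Define C(p) = P(|K/n - p| < εp). Then the minimum of C(p) over p ∈ [a,b] is attained at some point of the finite set {a, b} ∪ {ℓ/(n(1+ε)) ∈ (a,b) : ℓ ∈ ℤ} ∪ {ℓ/(n(1-ε)) ∈ (a,b) : ℓ ∈ ℤ}. -/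
open scoped Classical

noncomputable def wfun (n k : ℕ) (q : ℝ) : ℝ :=
  if k = 0 then 0 else (n : ℝ) * ((n-1).choose (k-1) : ℝ) * q^(k-1) * (1-q)^(n-k)

noncomputable def Gfun (n l1 l2 : ℕ) (q : ℝ) : ℝ :=
  ∑ k ∈ Finset.Icc l1 l2, (n.choose k : ℝ) * q ^ k * (1 - q) ^ (n - k)

lemma nat_id1 (n k : ℕ) : (k+1) * n.choose (k+1) = n * (n-1).choose k := by
  cases n with
  | zero => simp [Nat.choose_eq_zero_of_lt (Nat.succ_pos k)]
  | succ m =>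
    rw [Nat.succ_sub_one, Nat.add_one_mul_choose_eq m k, mul_comm]

lemma nat_id2 (n k : ℕ) : n.choose k * (n - k) = n * (n-1).choose k := by
  cases n with
  | zero => simp
  | succ m =>
    rw [Nat.succ_sub_one, ← Nat.choose_mul_succ_eq m k]
    ring

lemma term_hasDerivAt (n k : ℕ) (q : ℝ) :
    HasDerivAt (fun x : ℝ => (n.choose k : ℝ) * x ^ k * (1 - x) ^ (n - k))
      (wfun n k q - wfun n (k+1) q) q := by
  have h2 : HasDerivAt (fun x : ℝ => (1-x)^(n-k))
      (((n-k : ℕ) : ℝ) * (1-q)^(n-k-1) * (-1)) q := by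
    have := ((hasDerivAt_id q).const_sub 1).fun_pow (n-k)
    simpa using this
  have h1 : HasDerivAt (fun x : ℝ => (n.choose k : ℝ) * x ^ k)
      ((n.choose k : ℝ) * ((k : ℝ) * q^(k-1))) q := (hasDerivAt_pow k q).const_mul _
  have := h1.fun_mul h2
  convert this using 1
  · rfl
  · rfl
  rcases Nat.eq_zero_or_pos k with rfl | hk
  · simp [wfun]
  · obtain ⟨j, rfl⟩ := Nat.exists_eq_add_of_lt hk
    simp only [Nat.zero_add] at *
    have e1 : ((j+1 : ℕ) : ℝ) * (n.choose (j+1) : ℝ) = (n : ℝ) * ((n-1).choose j : ℝ) := by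
      exact_mod_cast congrArg (Nat.cast (R := ℝ)) (nat_id1 n j)
    have e2 : (n.choose (j+1) : ℝ) * ((n - (j+1) : ℕ) : ℝ) = (n:ℝ) * ((n-1).choose (j+1) : ℝ) := by
      exact_mod_cast congrArg (Nat.cast (R := ℝ)) (nat_id2 n (j+1))
    simp only [wfun, Nat.succ_ne_zero, if_false, Nat.add_sub_cancel]
    have e3 : n - (j+1) - 1 = n - (j+1+1) := by omega
    rw [e3]
    push_cast at e1 e2 ⊢
    linear_combination (-(q ^ j * (1 - q) ^ (n - (j+1)))) * e1 + (q ^ (j+1) * (1 - q) ^ (n - (j+1+1))) * e2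

lemma G_hasDerivAt (n l1 l2 : ℕ) (h12 : l1 ≤ l2) (q : ℝ) :
    HasDerivAt (Gfun n l1 l2) (wfun n l1 q - wfun n (l2+1) q) q := by
  have h : HasDerivAt (Gfun n l1 l2)
      (∑ k ∈ Finset.Icc l1 l2, (wfun n k q - wfun n (k+1) q)) q := by
    apply HasDerivAt.fun_sum
    intro k _
    exact term_hasDerivAt n k q
  convert h using 1
  rw [← Finset.Ico_add_one_right_eq_Icc, Finset.sum_Ico_eq_sub _ (show l1 ≤ l2 + 1 from Nat.le_succ_of_le h12),
    Finset.sum_range_sub' (fun k => wfun n k q), Finset.sum_range_sub' (fun k => wfun n k q)]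
  ring

noncomputable def Afac (n l1 : ℕ) : ℝ := if l1 = 0 then 0 else (n : ℝ) * ((n-1).choose (l1-1) : ℝ)
noncomputable def Bfac (n l2 : ℕ) : ℝ := (n : ℝ) * ((n-1).choose l2 : ℝ)
noncomputable def hfun (n l1 l2 : ℕ) (q : ℝ) : ℝ :=
  Afac n l1 * (1-q)^((n-l1) - (n-1-l2)) - Bfac n l2 * q^(l2 - (l1-1))

lemma deriv_factor (n l1 l2 : ℕ) (h12 : l1 ≤ l2) (q : ℝ) :
    wfun n l1 q - wfun n (l2+1) q = q^(l1-1) * (1-q)^(n-1-l2) * hfun n l1 l2 q := by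
  have hw1 : wfun n l1 q = Afac n l1 * q^(l1-1) * (1-q)^(n-l1) := by
    unfold wfun Afac
    split <;> simp [*]
  have hw2 : wfun n (l2+1) q = Bfac n l2 * q^l2 * (1-q)^(n-1-l2) := by
    unfold wfun Bfac
    rw [if_neg (Nat.succ_ne_zero l2)]
    have : n - (l2+1) = n - 1 - l2 := by omega
    rw [this, Nat.add_sub_cancel]
  have e1 : (n-1-l2) + ((n-l1) - (n-1-l2)) = n - l1 := by omega
  have e2 : (l1-1) + (l2 - (l1-1)) = l2 := by omega
  rw [hw1, hw2]
  unfold hfun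
  have p1 : (1-q)^(n-1-l2) * (1-q)^((n-l1)-(n-1-l2)) = (1-q)^(n-l1) := by rw [← pow_add, e1]
  have p2 : q^(l1-1) * q^(l2-(l1-1)) = q^l2 := by rw [← pow_add, e2]
  linear_combination (-(Afac n l1 * q^(l1-1))) * p1 + (Bfac n l2 * (1-q)^(n-1-l2)) * p2

lemma h_antitone (n l1 l2 : ℕ) : AntitoneOn (hfun n l1 l2) (Set.Icc (0:ℝ) 1) := by
  intro x hx y hy hxy
  unfold hfun
  have hA : 0 ≤ Afac n l1 := by unfold Afac; split <;> positivity
  have hB : 0 ≤ Bfac n l2 := by unfold Bfac; positivity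
  apply sub_le_sub
  · exact mul_le_mul_of_nonneg_left (pow_le_pow_left₀ (by linarith [hy.2]) (by linarith) _) hA
  · exact mul_le_mul_of_nonneg_left (pow_le_pow_left₀ hx.1 hxy _) hB

lemma key_s13 (n l1 l2 : ℕ) (h12 : l1 ≤ l2) (c d : ℝ) (hc : 0 ≤ c) (hd : d ≤ 1)
    (x : ℝ) (hx : x ∈ Set.Icc c d) :
    min (Gfun n l1 l2 c) (Gfun n l1 l2 d) ≤ Gfun n l1 l2 x := by
  obtain ⟨hcx, hxd⟩ := hx
  have hdiff : Differentiable ℝ (Gfun n l1 l2) :=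
    fun z => (G_hasDerivAt n l1 l2 h12 z).differentiableAt
  have hderiv : ∀ z : ℝ, deriv (Gfun n l1 l2) z
      = z^(l1-1) * (1-z)^(n-1-l2) * hfun n l1 l2 z := by
    intro z
    rw [(G_hasDerivAt n l1 l2 h12 z).deriv, deriv_factor n l1 l2 h12 z]
  have hx01 : x ∈ Set.Icc (0:ℝ) 1 := ⟨le_trans hc hcx, le_trans hxd hd⟩
  rcases le_total 0 (hfun n l1 l2 x) with hpos | hneg
  · refine le_trans (min_le_left _ _) ?_
    have mono : MonotoneOn (Gfun n l1 l2) (Set.Icc c x) := by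
      apply monotoneOn_of_deriv_nonneg (convex_Icc c x) hdiff.continuous.continuousOn
        hdiff.differentiableOn
      intro z hz
      rw [interior_Icc] at hz
      rw [hderiv]
      have hz01 : z ∈ Set.Icc (0:ℝ) 1 := ⟨le_trans hc hz.1.le, le_trans hz.2.le hx01.2⟩
      have := h_antitone n l1 l2 hz01 hx01 hz.2.le
      have h1 : (0:ℝ) ≤ z^(l1-1) * (1-z)^(n-1-l2) :=
        mul_nonneg (pow_nonneg hz01.1 _) (pow_nonneg (by linarith [hz01.2]) _)
      nlinarith [le_trans hpos this]
    exact mono ⟨le_refl c, hcx⟩ ⟨hcx, le_refl x⟩ hcx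
  · refine le_trans (min_le_right _ _) ?_
    have anti : AntitoneOn (Gfun n l1 l2) (Set.Icc x d) := by
      apply antitoneOn_of_deriv_nonpos (convex_Icc x d) hdiff.continuous.continuousOn
        hdiff.differentiableOn
      intro z hz
      rw [interior_Icc] at hz
      rw [hderiv]
      have hz01 : z ∈ Set.Icc (0:ℝ) 1 := ⟨le_trans hx01.1 hz.1.le, le_trans hz.2.le hd⟩
      have := h_antitone n l1 l2 hx01 hz01 hz.1.le
      have h1 : (0:ℝ) ≤ z^(l1-1) * (1-z)^(n-1-l2) :=
        mul_nonneg (pow_nonneg hz01.1 _) (pow_nonneg (by linarith [hz01.2]) _)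
      nlinarith [le_trans this hneg]
    exact anti ⟨le_refl x, hxd⟩ ⟨hxd, le_refl d⟩ hxd

lemma cond_iff (n : ℕ) (hn : 0 < n) (ε : ℝ) (hε : 0 < ε) (hε1 : ε < 1) (k : ℕ) (q : ℝ) :
    (|(k:ℝ)/n - q| < ε*q) ↔ ((k:ℝ)/(n*(1+ε)) < q ∧ q < (k:ℝ)/(n*(1-ε))) := by
  have hn' : (0:ℝ) < n := by exact_mod_cast hn
  have h1 : (0:ℝ) < n*(1+ε) := by positivity
  have h2 : (0:ℝ) < n*(1-ε) := mul_pos hn' (by linarith)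
  rw [abs_sub_lt_iff, div_lt_iff₀ h1, lt_div_iff₀ h2]
  constructor
  · rintro ⟨hA, hB⟩
    constructor
    · have h3 : (k:ℝ)/n < q + ε*q := by linarith
      have := (div_lt_iff₀ hn').mp h3
      nlinarith
    · have h3 : q - ε*q < (k:ℝ)/n := by linarith
      have := (lt_div_iff₀ hn').mp h3
      nlinarith
  · rintro ⟨hA, hB⟩
    have h3 : (k:ℝ)/n < q + ε*q := (div_lt_iff₀ hn').mpr (by nlinarith)
    have h4 : q - ε*q < (k:ℝ)/n := (lt_div_iff₀ hn').mpr (by nlinarith)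
    exact ⟨by linarith, by linarith⟩

lemma finite_aux (c : ℝ) (hc : 0 < c) (a b : ℝ) :
    {x : ℝ | (∃ ℓ : ℤ, x = (ℓ:ℝ)/c) ∧ a < x ∧ x < b}.Finite := by
  apply Set.Finite.subset
    (Set.Finite.image (fun ℓ : ℤ => (ℓ:ℝ)/c) (Set.finite_Icc ⌈a*c⌉ ⌊b*c⌋))
  rintro x ⟨⟨ℓ, rfl⟩, h1, h2⟩
  refine ⟨ℓ, ⟨?_, ?_⟩, rfl⟩
  · exact Int.ceil_le.mpr ((lt_div_iff₀ hc).mp h1).le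
  · exact Int.le_floor.mpr ((div_lt_iff₀ hc).mp h2).le

noncomputable def covFn (n : ℕ) (ε : ℝ) (p : ℝ) : ℝ :=
  ∑ k ∈ Finset.range (n+1),
    if |(k : ℝ) / n - p| < ε * p then (n.choose k : ℝ) * p ^ k * (1 - p) ^ (n - k) else 0

theorem main_aux (n : ℕ) (hn : 0 < n) (ε : ℝ) (hε : 0 < ε) (hε1 : ε < 1)
    (a b : ℝ) (ha : 0 < a) (hab : a < b) (hb : b ≤ 1) :
    ∃ p₀ : ℝ,
      (p₀ = a ∨ p₀ = b ∨
        (∃ ℓ : ℤ, p₀ = (ℓ : ℝ) / (n * (1 + ε)) ∧ a < p₀ ∧ p₀ < b) ∨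
        (∃ ℓ : ℤ, p₀ = (ℓ : ℝ) / (n * (1 - ε)) ∧ a < p₀ ∧ p₀ < b)) ∧
      p₀ ∈ Set.Icc a b ∧
      ∀ p ∈ Set.Icc a b, covFn n ε p₀ ≤ covFn n ε p := by
  have hn' : (0:ℝ) < n := by exact_mod_cast hn
  have hN1 : (0:ℝ) < n*(1+ε) := by positivity
  have hN2 : (0:ℝ) < n*(1-ε) := mul_pos hn' (by linarith)
  set T : Set ℝ := ({a, b} ∪ {x : ℝ | (∃ ℓ : ℤ, x = (ℓ:ℝ)/(n*(1+ε))) ∧ a < x ∧ x < b})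
      ∪ {x : ℝ | (∃ ℓ : ℤ, x = (ℓ:ℝ)/(n*(1-ε))) ∧ a < x ∧ x < b} with hTdef
  have hTfin : T.Finite :=
    (((Set.finite_singleton b).insert a).union (finite_aux _ hN1 a b)).union
      (finite_aux _ hN2 a b)
  have hTsub : T ⊆ Set.Icc a b := by
    rintro x (( (rfl | rfl) | ⟨-, h1, h2⟩) | ⟨-, h1, h2⟩)
    · exact ⟨le_refl x, hab.le⟩
    · exact ⟨hab.le, le_refl x⟩
    · exact ⟨h1.le, h2.le⟩
    · exact ⟨h1.le, h2.le⟩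
  have haT : a ∈ T := Or.inl (Or.inl (Set.mem_insert a {b}))
  have hbT : b ∈ T := Or.inl (Or.inl (Set.mem_insert_of_mem a rfl))
  obtain ⟨p₀, hp₀T, hp₀min⟩ := Set.exists_min_image T (covFn n ε) hTfin ⟨a, haT⟩
  refine ⟨p₀, ?_, hTsub hp₀T, ?_⟩
  · rcases hp₀T with (((h | h) | ⟨⟨ℓ, hℓ⟩, h1, h2⟩) | ⟨⟨ℓ, hℓ⟩, h1, h2⟩)
    · exact Or.inl h
    · exact Or.inr (Or.inl h)
    · exact Or.inr (Or.inr (Or.inl ⟨ℓ, hℓ, h1, h2⟩))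
    · exact Or.inr (Or.inr (Or.inr ⟨ℓ, hℓ, h1, h2⟩))
  intro p hp
  by_cases hpT : p ∈ T
  · exact hp₀min p hpT
  have hpa : a < p := hp.1.lt_of_ne (by rintro rfl; exact hpT haT)
  have hpb : p < b := hp.2.lt_of_ne' (by rintro rfl; exact hpT hbT)
  obtain ⟨c, ⟨hcT, hcp⟩, hcmax⟩ :=
    Set.exists_max_image (T ∩ Set.Iio p) id (hTfin.inter_of_left _) ⟨a, haT, hpa⟩
  obtain ⟨d, ⟨hdT, hpd⟩, hdmin⟩ :=
    Set.exists_min_image (T ∩ Set.Ioi p) id (hTfin.inter_of_left _) ⟨b, hbT, hpb⟩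
  simp only [Set.mem_Iio] at hcp
  simp only [Set.mem_Ioi] at hpd
  have hac : a ≤ c := (hTsub hcT).1
  have hdb : d ≤ b := (hTsub hdT).2
  have hc0 : 0 ≤ c := le_trans ha.le hac
  have hd1 : d ≤ 1 := le_trans hdb hb
  have hc1 : c ≤ 1 := le_trans (le_trans hcp.le hpd.le) hd1
  have hd0 : 0 ≤ d := le_trans hc0 (le_trans hcp.le hpd.le)
  have claim_c : ∀ k : ℕ, |(k:ℝ)/n - c| < ε*c → |(k:ℝ)/n - p| < ε*p := by
    intro k hk
    rw [cond_iff n hn ε hε hε1] at hk ⊢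
    obtain ⟨h1, h2⟩ := hk
    refine ⟨h1.trans hcp, ?_⟩
    by_contra hvp
    push_neg at hvp
    have hv_mem : (k:ℝ)/(n*(1-ε)) ∈ T :=
      Or.inr ⟨⟨(k:ℤ), by push_cast; ring⟩, lt_of_le_of_lt hac h2, lt_of_le_of_lt hvp hpb⟩
    rcases eq_or_lt_of_le hvp with heq | hlt
    · exact hpT (by rw [heq] at hv_mem; exact hv_mem)
    · have := hcmax _ ⟨hv_mem, hlt⟩
      simp only [id] at this
      linarith
  have claim_d : ∀ k : ℕ, |(k:ℝ)/n - d| < ε*d → |(k:ℝ)/n - p| < ε*p := by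
    intro k hk
    rw [cond_iff n hn ε hε hε1] at hk ⊢
    obtain ⟨h1, h2⟩ := hk
    refine ⟨?_, hpd.trans h2⟩
    by_contra hup
    push_neg at hup
    have hu_mem : (k:ℝ)/(n*(1+ε)) ∈ T :=
      Or.inl (Or.inr ⟨⟨(k:ℤ), by push_cast; ring⟩, lt_of_lt_of_le hpa hup, lt_of_lt_of_le h1 hdb⟩)
    rcases eq_or_lt_of_le hup with heq | hlt
    · exact hpT (by rw [← heq] at hu_mem; exact hu_mem)
    · have := hdmin _ ⟨hu_mem, hlt⟩
      simp only [id] at this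
      linarith
  set F : Finset ℕ :=
    (Finset.range (n+1)).filter (fun k => |(k:ℝ)/n - p| < ε*p) with hFdef
  have hgcov : ∀ q : ℝ, (∑ k ∈ F, (n.choose k : ℝ) * q ^ k * (1 - q) ^ (n - k))
      = ∑ k ∈ Finset.range (n+1), if |(k:ℝ)/n - p| < ε*p then
          (n.choose k : ℝ) * q ^ k * (1 - q) ^ (n - k) else 0 := by
    intro q
    rw [hFdef, Finset.sum_filter]
  have hgp : covFn n ε p = ∑ k ∈ F, (n.choose k : ℝ) * p ^ k * (1 - p) ^ (n - k) := by
    rw [hgcov p]; rfl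
  have hgc : covFn n ε c ≤ ∑ k ∈ F, (n.choose k : ℝ) * c ^ k * (1 - c) ^ (n - k) := by
    rw [hgcov c, covFn]
    apply Finset.sum_le_sum
    intro k _
    by_cases hkc : |(k:ℝ)/n - c| < ε*c
    · rw [if_pos hkc, if_pos (claim_c k hkc)]
    · rw [if_neg hkc]
      split
      · exact mul_nonneg (mul_nonneg (by positivity) (pow_nonneg hc0 _))
          (pow_nonneg (by linarith) _)
      · exact le_refl 0
  have hgd : covFn n ε d ≤ ∑ k ∈ F, (n.choose k : ℝ) * d ^ k * (1 - d) ^ (n - k) := by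
    rw [hgcov d, covFn]
    apply Finset.sum_le_sum
    intro k _
    by_cases hkd : |(k:ℝ)/n - d| < ε*d
    · rw [if_pos hkd, if_pos (claim_d k hkd)]
    · rw [if_neg hkd]
      split
      · exact mul_nonneg (mul_nonneg (by positivity) (pow_nonneg hd0 _))
          (pow_nonneg (by linarith) _)
      · exact le_refl 0
  rcases F.eq_empty_or_nonempty with hFe | hFne
  · have h0 : covFn n ε p = 0 := by rw [hgp, hFe, Finset.sum_empty]
    have := le_trans (hp₀min c hcT) hgc
    rw [hFe, Finset.sum_empty] at this
    rw [h0]; exact this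
  · set l1 := F.min' hFne with hl1def
    set l2 := F.max' hFne with hl2def
    have h12 : l1 ≤ l2 := F.min'_le _ (F.max'_mem hFne)
    have hl1F : l1 ∈ F := F.min'_mem hFne
    have hl2F : l2 ∈ F := F.max'_mem hFne
    have hF : F = Finset.Icc l1 l2 := by
      apply Finset.ext
      intro k
      simp only [Finset.mem_Icc]
      constructor
      · intro hk; exact ⟨F.min'_le k hk, F.le_max' k hk⟩
      · rintro ⟨hk1, hk2⟩
        rw [hFdef, Finset.mem_filter, Finset.mem_range] at hl1F hl2F ⊢
        refine ⟨lt_of_le_of_lt hk2 hl2F.1, ?_⟩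
        have hcond1 := hl1F.2
        have hcond2 := hl2F.2
        rw [cond_iff n hn ε hε hε1] at hcond1 hcond2 ⊢
        constructor
        · refine lt_of_le_of_lt ?_ hcond2.1
          gcongr
        · refine lt_of_lt_of_le hcond1.2 ?_
          gcongr
    have hgG : ∀ q : ℝ, (∑ k ∈ F, (n.choose k : ℝ) * q ^ k * (1 - q) ^ (n - k))
        = Gfun n l1 l2 q := by
      intro q; rw [hF]; rfl
    have hkey := key_s13 n l1 l2 h12 c d hc0 hd1 p ⟨hcp.le, hpd.le⟩
    calc covFn n ε p₀ ≤ min (covFn n ε c) (covFn n ε d) :=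
            le_min (hp₀min c hcT) (hp₀min d hdT)
      _ ≤ min (∑ k ∈ F, (n.choose k : ℝ) * c ^ k * (1 - c) ^ (n - k))
            (∑ k ∈ F, (n.choose k : ℝ) * d ^ k * (1 - d) ^ (n - k)) := min_le_min hgc hgd
      _ ≤ ∑ k ∈ F, (n.choose k : ℝ) * p ^ k * (1 - p) ^ (n - k) := by
            rw [hgG c, hgG d, hgG p]; exact hkey
      _ = covFn n ε p := hgp.symm


theorem coverage_min_attained_rel (n : ℕ) (hn : 0 < n) (ε : ℝ) (hε : 0 < ε) (hε1 : ε < 1)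
    (a b : ℝ) (ha : 0 < a) (hab : a < b) (hb : b ≤ 1) :
    ∃ p₀ : ℝ,
      (p₀ = a ∨ p₀ = b ∨
        (∃ ℓ : ℤ, p₀ = (ℓ : ℝ) / (n * (1 + ε)) ∧ a < p₀ ∧ p₀ < b) ∨
        (∃ ℓ : ℤ, p₀ = (ℓ : ℝ) / (n * (1 - ε)) ∧ a < p₀ ∧ p₀ < b)) ∧
      p₀ ∈ Set.Icc a b ∧
      ∀ p ∈ Set.Icc a b,
        (∑ k ∈ Finset.range (n + 1),
            if |(k : ℝ) / n - p₀| < ε * p₀ then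
              (n.choose k : ℝ) * p₀ ^ k * (1 - p₀) ^ (n - k) else 0)
          ≤ ∑ k ∈ Finset.range (n + 1),
            if |(k : ℝ) / n - p| < ε * p then
              (n.choose k : ℝ) * p ^ k * (1 - p) ^ (n - k) else 0 := by
  obtain ⟨p₀, h1, h2, h3⟩ := main_aux n hn ε hε hε1 a b ha hab hb
  exact ⟨p₀, h1, h2, h3⟩
end

section
/- Let n ≥ 2 be an integer, integers r ≤ s with 1 ≤ r and s ≤ n-1, and θ ∈ (0, 1 - 1/n). Define S(n,r,s,p) = Σ_{k=r}^{s} B(n,k,p) with B(n,k,p) = C(n,k)p^k(1-p)^(n-k) (zero for k outside [0,n]). Then S(n,r,s+1,θ+1/n) - S(n,r-1,s,θ) = B(n-1,r-1,θ) + B(n,s+1,θ+1/n) - B(n,r-1,θ) - B(n-1,s,θ) + ((n-1)/(2n))[B(n-2,r-2,ζ) + B(n-2,s,ζ) - B(n-2,r-1,ζ) - B(n-2,s-1,ζ)] for some ζ ∈ (θ, θ+1/n). -/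
/-- Binomial probability mass `B(m, j, p)`, defined to be `0` when `j < 0` or `j > m`. -/
def binomB (m : ℕ) (j : ℤ) (p : ℝ) : ℝ :=
  if 0 ≤ j ∧ j ≤ (m : ℤ) then (m.choose j.toNat : ℝ) * p ^ j.toNat * (1 - p) ^ (m - j.toNat)
  else 0


lemma binomB_coe (m k : ℕ) (hk : k ≤ m) (p : ℝ) :
    binomB m (k : ℤ) p = (m.choose k : ℝ) * p ^ k * (1 - p) ^ (m - k) := by
  rw [binomB, if_pos ⟨by positivity, by exact_mod_cast hk⟩]
  simp

lemma binomB_zero_of (m : ℕ) (j : ℤ) (p : ℝ) (h : j < 0 ∨ (m : ℤ) < j) : binomB m j p = 0 := by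
  rw [binomB, if_neg]; omega

lemma binomB_hasDerivAt (m : ℕ) (hm : 1 ≤ m) (j : ℤ) (p : ℝ) :
    HasDerivAt (fun q => binomB m j q)
      ((m : ℝ) * (binomB (m - 1) (j - 1) p - binomB (m - 1) j p)) p := by
  by_cases hj : 0 ≤ j ∧ j ≤ (m : ℤ)
  · obtain ⟨k, rfl⟩ : ∃ k : ℕ, j = (k : ℤ) := ⟨j.toNat, by omega⟩
    have hkm : k ≤ m := by exact_mod_cast hj.2
    have hfun : (fun q => binomB m (k : ℤ) q)
        = fun q : ℝ => (m.choose k : ℝ) * (q ^ k * (1 - q) ^ (m - k)) := by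
      funext q; rw [binomB_coe m k hkm, mul_assoc]
    have h1 : HasDerivAt (fun q : ℝ => q ^ k) ((k : ℝ) * p ^ (k - 1)) p := hasDerivAt_pow k p
    have h2 : HasDerivAt (fun q : ℝ => (1 - q) ^ (m - k))
        (((m - k : ℕ) : ℝ) * (1 - p) ^ (m - k - 1) * (-1)) p :=
      ((hasDerivAt_id p).const_sub 1).pow (m - k)
    have h := (h1.mul h2).const_mul (m.choose k : ℝ)
    rw [hfun]
    have hval : (m : ℝ) * (binomB (m - 1) ((k : ℤ) - 1) p - binomB (m - 1) (k : ℤ) p)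
        = (m.choose k : ℝ) * ((k : ℝ) * p ^ (k - 1) * (1 - p) ^ (m - k)
            + p ^ k * (((m - k : ℕ) : ℝ) * (1 - p) ^ (m - k - 1) * (-1))) := by
      rcases Nat.eq_zero_or_pos k with rfl | hkpos
      · rw [binomB_zero_of _ _ _ (by omega), binomB_coe (m - 1) 0 (by omega)]
        simp
      · rcases eq_or_lt_of_le hkm with rfl | hklt
        · have ek1 : ((k : ℤ) - 1) = ((k - 1 : ℕ) : ℤ) := by omega
          rw [ek1, binomB_coe (k - 1) (k - 1) le_rfl, binomB_zero_of _ _ _ (by omega)]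
          rw [Nat.choose_self, Nat.sub_self, Nat.sub_self]
          simp
        · have ek1 : ((k : ℤ) - 1) = ((k - 1 : ℕ) : ℤ) := by omega
          rw [ek1, binomB_coe (m - 1) (k - 1) (by omega), binomB_coe (m - 1) k (by omega)]
          have es1 : m - 1 - (k - 1) = m - k := by omega
          have es2 : m - 1 - k = m - k - 1 := by omega
          rw [es1, es2]
          have hn1 : m * (m - 1).choose (k - 1) = m.choose k * k := by
            have h := Nat.add_one_mul_choose_eq (m - 1) (k - 1)
            have e1 : m - 1 + 1 = m := by omega
            have e2 : k - 1 + 1 = k := by omega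
            simp only [Nat.succ_eq_add_one, e1, e2] at h; exact h
          have hn2 : m * (m - 1).choose k = m.choose k * (m - k) := by
            have h1 := Nat.add_one_mul_choose_eq (m - 1) k
            have e1 : m - 1 + 1 = m := by omega
            simp only [Nat.succ_eq_add_one, e1] at h1
            rw [h1, Nat.choose_succ_right_eq]
          have hc1 : (m : ℝ) * ((m - 1).choose (k - 1) : ℝ) = (m.choose k : ℝ) * (k : ℝ) := by
            exact_mod_cast hn1
          have hc2 : (m : ℝ) * ((m - 1).choose k : ℝ)
              = (m.choose k : ℝ) * ((m - k : ℕ) : ℝ) := by exact_mod_cast hn2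
          linear_combination (p ^ (k - 1) * (1 - p) ^ (m - k)) * hc1
            - (p ^ k * (1 - p) ^ (m - k - 1)) * hc2
    rw [hval]
    exact h
  · have hfun : (fun q => binomB m j q) = fun _ : ℝ => (0 : ℝ) := by
      funext q; rw [binomB, if_neg hj]
    rw [hfun, binomB_zero_of _ _ _ (by omega), binomB_zero_of _ _ _ (by omega), sub_zero,
      mul_zero]
    exact hasDerivAt_const p 0

lemma sum_telescope_Icc (g : ℤ → ℝ) (a : ℤ) :
    ∀ b, a ≤ b → ∑ k ∈ Finset.Icc a b, (g k - g (k + 1)) = g a - g (b + 1) := by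
  refine Int.le_induction ?_ ?_
  · simp
  · intro b hb ih
    have hins : Finset.Icc a (b + 1) = insert (b + 1) (Finset.Icc a b) := by
      ext x; simp only [Finset.mem_Icc, Finset.mem_insert]; omega
    rw [hins, Finset.sum_insert (by simp [Finset.mem_Icc]), ih]
    ring
lemma taylor2 (f f1 f2 : ℝ → ℝ) (a b : ℝ) (hab : a < b)
    (h1 : ∀ x, HasDerivAt f (f1 x) x) (h2 : ∀ x, HasDerivAt f1 (f2 x) x) :
    ∃ ζ ∈ Set.Ioo a b, f b = f a + (b - a) * f1 a + (b - a) ^ 2 / 2 * f2 ζ := by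
  have hba : b - a ≠ 0 := sub_ne_zero.mpr hab.ne'
  obtain ⟨M, key⟩ : ∃ M : ℝ, M * (b - a) ^ 2 / 2 = f b - f a - (b - a) * f1 a :=
    ⟨(f b - f a - (b - a) * f1 a) / ((b - a) ^ 2 / 2), by field_simp⟩
  set g : ℝ → ℝ := fun t => f b - f t - (b - t) * f1 t - M * (b - t) ^ 2 / 2 with hg
  have hd : ∀ t, HasDerivAt g ((b - t) * (M - f2 t)) t := by
    intro t
    have hA : HasDerivAt (fun t : ℝ => (b - t) * f1 t) ((-1) * f1 t + (b - t) * f2 t) t :=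
      (((hasDerivAt_id t).const_sub b).mul (h2 t))
    have hB : HasDerivAt (fun t : ℝ => M * (b - t) ^ 2 / 2)
        (M * (2 * (b - t) ^ 1 * (-1)) / 2) t :=
      ((((hasDerivAt_id t).const_sub b).pow 2).const_mul M).div_const 2
    have := (((hasDerivAt_const t (f b)).sub (h1 t)).sub hA).sub hB
    exact this.congr_deriv (by ring)
  have hga : g a = 0 := by
    simp only [hg]; linear_combination -key
  have hgb : g b = 0 := by simp [hg]
  obtain ⟨c, hc, hc0⟩ := exists_hasDerivAt_eq_zero hab
    (fun x _ => (hd x).continuousAt.continuousWithinAt) (hga.trans hgb.symm)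
    (fun x _ => hd x)
  refine ⟨c, hc, ?_⟩
  have hbc : b - c ≠ 0 := by have := hc.2; intro h; linarith [sub_eq_zero.mp h]
  have hMc : f2 c = M := by
    rcases mul_eq_zero.mp hc0 with h | h
    · exact absurd h hbc
    · linarith
  rw [hMc]
  linear_combination -key

theorem binom_sum_taylor_step (n : ℕ) (hn : 2 ≤ n) (r s : ℤ) (hr : 1 ≤ r) (hrs : r ≤ s)
    (hs : s ≤ (n : ℤ) - 1) (θ : ℝ) (hθ : θ ∈ Set.Ioo (0 : ℝ) (1 - 1 / n)) :
    ∃ ζ ∈ Set.Ioo θ (θ + 1 / n),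
      (∑ k ∈ Finset.Icc r (s + 1), binomB n k (θ + 1 / n))
          - ∑ k ∈ Finset.Icc (r - 1) s, binomB n k θ
        = binomB (n - 1) (r - 1) θ + binomB n (s + 1) (θ + 1 / n)
          - binomB n (r - 1) θ - binomB (n - 1) s θ
          + ((n : ℝ) - 1) / (2 * n) *
            (binomB (n - 2) (r - 2) ζ + binomB (n - 2) s ζ
              - binomB (n - 2) (r - 1) ζ - binomB (n - 2) (s - 1) ζ) := by
  have hn0 : (0 : ℝ) < (n : ℝ) := by
    have : 0 < n := by omega
    exact_mod_cast this
  have hstep : θ < θ + 1 / n := by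
    have : 0 < 1 / (n : ℝ) := by positivity
    linarith
  set f : ℝ → ℝ := fun q => ∑ k ∈ Finset.Icc r s, binomB n k q with hf_def
  set f1 : ℝ → ℝ := fun q =>
    (n : ℝ) * (binomB (n - 1) (r - 1) q - binomB (n - 1) s q) with hf1_def
  set f2 : ℝ → ℝ := fun q =>
    (n : ℝ) * ((n : ℝ) - 1) * (binomB (n - 2) (r - 2) q + binomB (n - 2) s q
      - binomB (n - 2) (r - 1) q - binomB (n - 2) (s - 1) q) with hf2_def
  have hf : ∀ p, HasDerivAt f (f1 p) p := by
    intro p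
    have h := HasDerivAt.fun_sum
      (fun k (_ : k ∈ Finset.Icc r s) => binomB_hasDerivAt n (by omega) k p)
    have htel := sum_telescope_Icc (fun j => binomB (n - 1) (j - 1) p) r s hrs
    simp only [add_sub_cancel_right] at htel
    have hval : ∑ k ∈ Finset.Icc r s,
        (n : ℝ) * (binomB (n - 1) (k - 1) p - binomB (n - 1) k p) = f1 p := by
      rw [← Finset.mul_sum, htel, hf1_def]
    rw [hval] at h
    exact h
  have hf1 : ∀ p, HasDerivAt f1 (f2 p) p := by
    intro p
    have ha := binomB_hasDerivAt (n - 1) (by omega) (r - 1) p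
    have hb := binomB_hasDerivAt (n - 1) (by omega) s p
    have hnn : n - 1 - 1 = n - 2 := by omega
    have hr2 : r - 1 - 1 = r - 2 := by ring
    rw [hnn, hr2] at ha
    rw [hnn] at hb
    have h := (ha.sub hb).const_mul (n : ℝ)
    have hcast : ((n - 1 : ℕ) : ℝ) = (n : ℝ) - 1 := by
      have : 1 ≤ n := by omega
      push_cast [this]
      ring
    have hval : (n : ℝ) * (((n - 1 : ℕ) : ℝ) * (binomB (n - 2) (r - 2) p
          - binomB (n - 2) (r - 1) p)
        - ((n - 1 : ℕ) : ℝ) * (binomB (n - 2) (s - 1) p - binomB (n - 2) s p)) = f2 p := by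
      rw [hcast, hf2_def]
      ring
    rw [hval] at h
    exact h
  obtain ⟨ζ, hζ, heq⟩ := taylor2 f f1 f2 θ (θ + 1 / n) hstep hf hf1
  rw [add_sub_cancel_left] at heq
  have hsplit1 : ∑ k ∈ Finset.Icc r (s + 1), binomB n k (θ + 1 / n)
      = binomB n (s + 1) (θ + 1 / n) + f (θ + 1 / n) := by
    have hins : Finset.Icc r (s + 1) = insert (s + 1) (Finset.Icc r s) := by
      ext x; simp only [Finset.mem_Icc, Finset.mem_insert]; omega
    rw [hins, Finset.sum_insert (by simp [Finset.mem_Icc])]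
  have hsplit2 : ∑ k ∈ Finset.Icc (r - 1) s, binomB n k θ
      = binomB n (r - 1) θ + f θ := by
    have hins : Finset.Icc (r - 1) s = insert (r - 1) (Finset.Icc r s) := by
      ext x; simp only [Finset.mem_Icc, Finset.mem_insert]; omega
    rw [hins, Finset.sum_insert (by simp [Finset.mem_Icc])]
  refine ⟨ζ, hζ, ?_⟩
  rw [hsplit1, hsplit2, heq, hf1_def, hf2_def]
  have hnne : (n : ℝ) ≠ 0 := ne_of_gt hn0
  field_simp
  ring
end

section
/- Let n be a positive integer, ε ∈ (0,1), p ∈ (0,1), and define g(p) = ⌊n(p-ε)⌋ + 1 and h(p) = ⌈n(p+ε)⌉ - 1, and C(p) = Σ_{k=g(p)}^{h(p)} C(n,k) p^k (1-p)^(n-k) (summing over k in [0,n] only). Then lim_{η→0+} C(p+η) ≥ C(p) and lim_{η→0+} C(p-η) ≥ C(p); in particular both one-sided limits exist. -/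
open Filter Topology

private def covF (n : ℕ) (a b : ℤ) (q : ℝ) : ℝ :=
  ∑ k ∈ Finset.range (n + 1),
    if a ≤ (k : ℤ) ∧ (k : ℤ) ≤ b then (n.choose k : ℝ) * q ^ k * (1 - q) ^ (n - k) else 0

private lemma covF_continuous (n : ℕ) (a b : ℤ) : Continuous (covF n a b) := by
  unfold covF
  apply continuous_finset_sum
  intro k _
  by_cases h : a ≤ (k : ℤ) ∧ (k : ℤ) ≤ b
  · simp only [if_pos h]
    fun_prop
  · simp only [if_neg h]
    exact continuous_const

private lemma covF_mono (n : ℕ) {a b a' b' : ℤ} (ha : a ≤ a') (hb : b' ≤ b)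
    (q : ℝ) (h0 : 0 ≤ q) (h1 : q ≤ 1) : covF n a' b' q ≤ covF n a b q := by
  apply Finset.sum_le_sum
  intro k _
  by_cases h : a' ≤ (k : ℤ) ∧ (k : ℤ) ≤ b'
  · rw [if_pos h, if_pos ⟨le_trans ha h.1, le_trans h.2 hb⟩]
  · rw [if_neg h]
    split_ifs with h2
    · have : (0:ℝ) ≤ 1 - q := by linarith
      positivity
    · exact le_refl 0

theorem coverage_one_sided_limits (n : ℕ) (hn : 0 < n) (ε : ℝ) (hε : 0 < ε) (hε1 : ε < 1)
    (p : ℝ) (hp : p ∈ Set.Ioo (0 : ℝ) 1) :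
    (∃ L : ℝ,
        Tendsto (fun q : ℝ => ∑ k ∈ Finset.range (n + 1),
            if ⌊(n : ℝ) * (q - ε)⌋ + 1 ≤ (k : ℤ) ∧ (k : ℤ) ≤ ⌈(n : ℝ) * (q + ε)⌉ - 1 then
              (n.choose k : ℝ) * q ^ k * (1 - q) ^ (n - k) else 0)
          (𝓝[>] p) (𝓝 L) ∧
        (∑ k ∈ Finset.range (n + 1),
            if ⌊(n : ℝ) * (p - ε)⌋ + 1 ≤ (k : ℤ) ∧ (k : ℤ) ≤ ⌈(n : ℝ) * (p + ε)⌉ - 1 then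
              (n.choose k : ℝ) * p ^ k * (1 - p) ^ (n - k) else 0) ≤ L) ∧
    (∃ L : ℝ,
        Tendsto (fun q : ℝ => ∑ k ∈ Finset.range (n + 1),
            if ⌊(n : ℝ) * (q - ε)⌋ + 1 ≤ (k : ℤ) ∧ (k : ℤ) ≤ ⌈(n : ℝ) * (q + ε)⌉ - 1 then
              (n.choose k : ℝ) * q ^ k * (1 - q) ^ (n - k) else 0)
          (𝓝[<] p) (𝓝 L) ∧
        (∑ k ∈ Finset.range (n + 1),
            if ⌊(n : ℝ) * (p - ε)⌋ + 1 ≤ (k : ℤ) ∧ (k : ℤ) ≤ ⌈(n : ℝ) * (p + ε)⌉ - 1 then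
              (n.choose k : ℝ) * p ^ k * (1 - p) ^ (n - k) else 0) ≤ L) := by
  obtain ⟨hp0, hp1⟩ := hp
  have hnR : (0:ℝ) < n := by exact_mod_cast hn
  set x : ℝ := (n : ℝ) * (p - ε) with hx
  set y : ℝ := (n : ℝ) * (p + ε) with hy
  have hCp : (∑ k ∈ Finset.range (n + 1),
      if ⌊(n : ℝ) * (p - ε)⌋ + 1 ≤ (k : ℤ) ∧ (k : ℤ) ≤ ⌈(n : ℝ) * (p + ε)⌉ - 1 then
        (n.choose k : ℝ) * p ^ k * (1 - p) ^ (n - k) else 0)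
      = covF n (⌊x⌋ + 1) (⌈y⌉ - 1) p := rfl
  constructor
  · -- right limit
    refine ⟨covF n (⌊x⌋ + 1) ⌊y⌋ p, ?_, ?_⟩
    · have hcont : Tendsto (covF n (⌊x⌋ + 1) ⌊y⌋) (𝓝[>] p)
          (𝓝 (covF n (⌊x⌋ + 1) ⌊y⌋ p)) :=
        ((covF_continuous n _ _).continuousAt).continuousWithinAt
      apply hcont.congr'
      have hδ1 : 0 < ((⌊x⌋:ℝ) + 1 - x) / n :=
        div_pos (by linarith [Int.lt_floor_add_one x]) hnR
      have hδ2 : 0 < ((⌊y⌋:ℝ) + 1 - y) / n :=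
        div_pos (by linarith [Int.lt_floor_add_one y]) hnR
      set δ := min (((⌊x⌋:ℝ) + 1 - x) / n) (((⌊y⌋:ℝ) + 1 - y) / n) with hδdef
      have hδ : 0 < δ := lt_min hδ1 hδ2
      filter_upwards [Ioo_mem_nhdsGT_of_mem
          (show p ∈ Set.Ico p (p + δ) from Set.mem_Ico.mpr ⟨le_refl p, by linarith⟩)]
        with q hq
      obtain ⟨hq1, hq2⟩ := hq
      have hqδ1 : q - p < ((⌊x⌋:ℝ) + 1 - x) / n := lt_of_lt_of_le (by linarith) (min_le_left _ _)
      have hqδ2 : q - p < ((⌊y⌋:ℝ) + 1 - y) / n := lt_of_lt_of_le (by linarith) (min_le_right _ _)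
      have hfl : ⌊(n : ℝ) * (q - ε)⌋ = ⌊x⌋ := by
        rw [Int.floor_eq_iff]
        constructor
        · refine le_trans (Int.floor_le x) ?_
          have : p - ε ≤ q - ε := by linarith
          nlinarith
        · have : (n:ℝ) * (q - p) < (⌊x⌋:ℝ) + 1 - x := by
            nlinarith [(lt_div_iff₀ hnR).mp hqδ1]
          have hexp : (n:ℝ) * (q - ε) = x + (n:ℝ) * (q - p) := by rw [hx]; ring
          push_cast
          linarith
      have hcl : ⌈(n : ℝ) * (q + ε)⌉ = ⌊y⌋ + 1 := by
        rw [Int.ceil_eq_iff]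
        constructor
        · push_cast
          have : (⌊y⌋:ℝ) ≤ y := Int.floor_le y
          nlinarith
        · have : (n:ℝ) * (q - p) < (⌊y⌋:ℝ) + 1 - y := by
            nlinarith [(lt_div_iff₀ hnR).mp hqδ2]
          have hexp : (n:ℝ) * (q + ε) = y + (n:ℝ) * (q - p) := by rw [hy]; ring
          push_cast
          linarith
      simp only [hfl, hcl, add_sub_cancel_right]
      rfl
    · rw [hCp]
      exact covF_mono n le_rfl (by linarith [Int.ceil_le_floor_add_one y]) p
        (le_of_lt hp0) (le_of_lt hp1)
  · -- left limit
    refine ⟨covF n ⌈x⌉ (⌈y⌉ - 1) p, ?_, ?_⟩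
    · have hcont : Tendsto (covF n ⌈x⌉ (⌈y⌉ - 1)) (𝓝[<] p)
          (𝓝 (covF n ⌈x⌉ (⌈y⌉ - 1) p)) :=
        ((covF_continuous n _ _).continuousAt).continuousWithinAt
      apply hcont.congr'
      have hδ1 : 0 < (x - ((⌈x⌉:ℝ) - 1)) / n :=
        div_pos (by linarith [Int.ceil_lt_add_one x]) hnR
      have hδ2 : 0 < (y - ((⌈y⌉:ℝ) - 1)) / n :=
        div_pos (by linarith [Int.ceil_lt_add_one y]) hnR
      set δ := min ((x - ((⌈x⌉:ℝ) - 1)) / n) ((y - ((⌈y⌉:ℝ) - 1)) / n) with hδdef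
      have hδ : 0 < δ := lt_min hδ1 hδ2
      filter_upwards [Ioo_mem_nhdsLT_of_mem
          (show p ∈ Set.Ioc (p - δ) p from Set.mem_Ioc.mpr ⟨by linarith, le_refl p⟩)]
        with q hq
      obtain ⟨hq1, hq2⟩ := hq
      have hqδ1 : p - q < (x - ((⌈x⌉:ℝ) - 1)) / n := lt_of_lt_of_le (by linarith) (min_le_left _ _)
      have hqδ2 : p - q < (y - ((⌈y⌉:ℝ) - 1)) / n := lt_of_lt_of_le (by linarith) (min_le_right _ _)
      have hfl : ⌊(n : ℝ) * (q - ε)⌋ = ⌈x⌉ - 1 := by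
        rw [Int.floor_eq_iff]
        constructor
        · have : (n:ℝ) * (p - q) < x - ((⌈x⌉:ℝ) - 1) := by
            nlinarith [(lt_div_iff₀ hnR).mp hqδ1]
          have hexp : (n:ℝ) * (q - ε) = x - (n:ℝ) * (p - q) := by rw [hx]; ring
          push_cast
          linarith
        · push_cast
          have : x ≤ (⌈x⌉:ℝ) := Int.le_ceil x
          nlinarith
      have hcl : ⌈(n : ℝ) * (q + ε)⌉ = ⌈y⌉ := by
        rw [Int.ceil_eq_iff]
        constructor
        · have : (n:ℝ) * (p - q) < y - ((⌈y⌉:ℝ) - 1) := by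
            nlinarith [(lt_div_iff₀ hnR).mp hqδ2]
          have hexp : (n:ℝ) * (q + ε) = y - (n:ℝ) * (p - q) := by rw [hy]; ring
          push_cast
          linarith
        · refine le_trans ?_ (Int.le_ceil y)
          nlinarith
      simp only [hfl, hcl, sub_add_cancel]
      rfl
    · rw [hCp]
      exact covF_mono n (by linarith [Int.ceil_le_floor_add_one x]) le_rfl p
        (le_of_lt hp0) (le_of_lt hp1)
end
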